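/- arXiv:2111.13577 — 8 statements merged into one kernel-verified Lean document; each statement's English description precedes it below -/
import Mathlib

section
/- Let M be a (2n+1)-dimensional para-Kenmotsu manifold admitting a proper h-almost Ricci–Yamabe soliton (g, ζ, λ, α, β) whose soliton vector field is the Reeb vector field ζ. Then M is an η-Einstein manifold; explicitly, its Ricci tensor satisfies α S(X,Y) = −(h + 2nα) g(X,Y) + h η(X)η(Y) for all vector fields X, Y. -/
/-!  An abstract model of the calculus of smooth functions and vector fields on a
semi-Riemannian manifold.  `F` plays the role of the ring of smooth real-valued
functions and `V` the role of the module of smooth vector fields.  -/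

/-- Semi-Riemannian structure: metric `g`, directional derivative `dd`, Lie bracket,
Levi-Civita connection `nabla`, Ricci tensor `ric`, Ricci operator `ricOp` and
scalar curvature `scal`, together with their standard axioms. -/
structure SemiRiemannian (F V : Type*) [CommRing F] [Algebra ℝ F]
    [AddCommGroup V] [Module F V] where
  g : V → V → F
  dd : V → F → F
  bracket : V → V → V
  nabla : V → V → V
  ric : V → V → F
  ricOp : V → V
  scal : F
  g_symm : ∀ X Y, g X Y = g Y X
  g_addL : ∀ X Y Z, g (X + Y) Z = g X Z + g Y Z
  g_smulL : ∀ (f : F) (X Y : V), g (f • X) Y = f * g X Y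
  g_addR : ∀ X Y Z, g X (Y + Z) = g X Y + g X Z
  g_smulR : ∀ (f : F) (X Y : V), g X (f • Y) = f * g X Y
  g_nondeg : ∀ X, (∀ Y, g X Y = 0) → X = 0
  dd_add : ∀ X (a b : F), dd X (a + b) = dd X a + dd X b
  dd_mul : ∀ X (a b : F), dd X (a * b) = dd X a * b + a * dd X b
  dd_const : ∀ X (c : ℝ), dd X ((algebraMap ℝ F) c) = 0
  dd_addL : ∀ X Y (a : F), dd (X + Y) a = dd X a + dd Y a
  dd_smulL : ∀ (f : F) (X : V) (a : F), dd (f • X) a = f * dd X a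
  nabla_addL : ∀ X Y Z, nabla (X + Y) Z = nabla X Z + nabla Y Z
  nabla_smulL : ∀ (f : F) (X Y : V), nabla (f • X) Y = f • nabla X Y
  nabla_addR : ∀ X Y Z, nabla X (Y + Z) = nabla X Y + nabla X Z
  nabla_leibniz : ∀ (X : V) (f : F) (Y : V),
    nabla X (f • Y) = dd X f • Y + f • nabla X Y
  compat : ∀ X Y Z, dd X (g Y Z) = g (nabla X Y) Z + g Y (nabla X Z)
  torsion_free : ∀ X Y, nabla X Y - nabla Y X = bracket X Y
  ric_symm : ∀ X Y, ric X Y = ric Y X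
  ricOp_spec : ∀ X Y, g (ricOp X) Y = ric X Y

namespace SemiRiemannian

variable {F V : Type*} [CommRing F] [Algebra ℝ F] [AddCommGroup V] [Module F V]

/-- The Riemann curvature tensor `R(X,Y)Z`. -/
def curv (D : SemiRiemannian F V) (X Y Z : V) : V :=
  D.nabla X (D.nabla Y Z) - D.nabla Y (D.nabla X Z) - D.nabla (D.bracket X Y) Z

/-- The Lie derivative of the metric: `(£_W g)(X,Y)`. -/
def lieG (D : SemiRiemannian F V) (W X Y : V) : F :=
  D.dd W (D.g X Y) - D.g (D.bracket W X) Y - D.g X (D.bracket W Y)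

/-- `Gf` is the gradient of `f` : `g(Gf, X) = X f` for all `X`. -/
def IsGradient (D : SemiRiemannian F V) (f : F) (Gf : V) : Prop :=
  ∀ X, D.g Gf X = D.dd X f

/-- The Hessian `∇²f(X,Y) = g(∇_X Df, Y)`, where `Df` is the gradient of `f`. -/
def hess (D : SemiRiemannian F V) (Df : V) (X Y : V) : F :=
  D.g (D.nabla X Df) Y

/-- A function is constant iff all its directional derivatives vanish. -/
def IsConstF (D : SemiRiemannian F V) (f : F) : Prop := ∀ X, D.dd X f = 0

end SemiRiemannian

/-- An almost paracontact metric structure `(φ, ζ, η, g)`. -/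
structure APContact (F V : Type*) [CommRing F] [Algebra ℝ F]
    [AddCommGroup V] [Module F V] extends SemiRiemannian F V where
  phi : V → V
  zeta : V
  eta : V → F
  phi_add : ∀ X Y, phi (X + Y) = phi X + phi Y
  phi_smul : ∀ (f : F) (X : V), phi (f • X) = f • phi X
  phi_sq : ∀ X, phi (phi X) = X - eta X • zeta
  eta_zeta : eta zeta = 1
  eta_eq : ∀ X, eta X = g X zeta
  g_phi : ∀ X Y, g (phi X) (phi Y) = - g X Y + eta X * eta Y

/-- A `(2n+1)`-dimensional para-Kenmotsu manifold:
`(∇_X φ)Y = g(φX,Y)ζ − η(Y)φX`, `∇_X ζ = X − η(X)ζ`, `S(X,ζ) = −2n η(X)`. -/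
structure ParaKenmotsu (F V : Type*) [CommRing F] [Algebra ℝ F]
    [AddCommGroup V] [Module F V] (n : ℕ) extends APContact F V where
  nabla_phi : ∀ X Y,
    nabla X (phi Y) - phi (nabla X Y) = g (phi X) Y • zeta - eta Y • phi X
  nabla_zeta : ∀ X, nabla X zeta = X - eta X • zeta
  ric_zeta : ∀ X, ric X zeta = -(2 * (n : F)) * eta X

/-- A 3-dimensional para-Kenmotsu manifold, together with the standard
3-dimensional identities `ζ r = −2(r+6)` and `QX = (r/2+1)X − (r/2+3)η(X)ζ`. -/
structure ParaKenmotsu3 (F V : Type*) [CommRing F] [Algebra ℝ F]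
    [AddCommGroup V] [Module F V] extends ParaKenmotsu F V 1 where
  zeta_scal : dd zeta scal = -2 * (scal + 6)
  ricOp_eq : ∀ X,
    ricOp X = ((1/2 : ℝ) • scal + 1) • X - (((1/2 : ℝ) • scal + 3) * eta X) • zeta

/-- A `(2n+1)`-dimensional para-Sasakian manifold:
`(∇_X φ)Y = −g(X,Y)ζ + η(Y)X`, `∇_X ζ = −φX`, `S(X,ζ) = −2n η(X)`. -/
structure ParaSasakian (F V : Type*) [CommRing F] [Algebra ℝ F]
    [AddCommGroup V] [Module F V] (n : ℕ) extends APContact F V where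
  nabla_phi : ∀ X Y,
    nabla X (phi Y) - phi (nabla X Y) = -(g X Y) • zeta + eta Y • X
  nabla_zeta : ∀ X, nabla X zeta = - phi X
  ric_zeta : ∀ X, ric X zeta = -(2 * (n : F)) * eta X

/-- A 3-dimensional para-Sasakian manifold, together with the standard
3-dimensional identities `QX = (r/2+1)X − (r/2+3)η(X)ζ`, `ζ r = 0` and the
expression of the curvature tensor of a 3-dimensional semi-Riemannian manifold
in terms of the Ricci tensor. -/
structure ParaSasakian3 (F V : Type*) [CommRing F] [Algebra ℝ F]
    [AddCommGroup V] [Module F V] extends ParaSasakian F V 1 where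
  zeta_scal : dd zeta scal = 0
  ricOp_eq : ∀ X,
    ricOp X = ((1/2 : ℝ) • scal + 1) • X - (((1/2 : ℝ) • scal + 3) * eta X) • zeta
  curv_eq : ∀ X Y Z,
    nabla X (nabla Y Z) - nabla Y (nabla X Z) - nabla (bracket X Y) Z =
      g Y Z • ricOp X - g X Z • ricOp Y + ric Y Z • X - ric X Z • Y
        - ((1/2 : ℝ) • scal) • (g Y Z • X - g X Z • Y)

/-- A para-cosymplectic manifold: `∇ζ = 0`, `R(X,Y)ζ = 0`, `S(X,ζ) = 0`. -/
structure ParaCosymplectic (F V : Type*) [CommRing F] [Algebra ℝ F]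
    [AddCommGroup V] [Module F V] extends APContact F V where
  nabla_zeta : ∀ X, nabla X zeta = 0
  curv_zeta : ∀ X Y,
    nabla X (nabla Y zeta) - nabla Y (nabla X zeta) - nabla (bracket X Y) zeta = 0
  ric_zeta : ∀ X, ric X zeta = 0

/-- A 3-dimensional para-cosymplectic manifold, together with the standard
3-dimensional identities `QX = (r/2)[X − η(X)ζ]`,
`S(X,Y) = (r/2)[g(X,Y) − η(X)η(Y)]` and `ζ r = 0`. -/
structure ParaCosymplectic3 (F V : Type*) [CommRing F] [Algebra ℝ F]
    [AddCommGroup V] [Module F V] extends ParaCosymplectic F V where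
  ricOp_eq : ∀ X, ricOp X = ((1/2 : ℝ) • scal) • (X - eta X • zeta)
  ric_eq : ∀ X Y, ric X Y = ((1/2 : ℝ) • scal) * (g X Y - eta X * eta Y)
  zeta_scal : dd zeta scal = 0

/-- A `(2n+1)`-dimensional para-Kenmotsu manifold admitting a proper
`h`-almost Ricci–Yamabe soliton `(g, ζ, λ, α, β)` is an η-Einstein manifold:
`α S(X,Y) = −(h + 2nα) g(X,Y) + h η(X)η(Y)`. -/
theorem paraKenmotsu_proper_hARYS_etaEinstein
    {F V : Type*} [CommRing F] [Algebra ℝ F] [AddCommGroup V] [Module F V]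
    (n : ℕ) (M : ParaKenmotsu F V n) (h lam : F) (α β : ℝ)
    (hproper : α ≠ 0 ∧ α ≠ 1)
    (hsol : ∀ X Y, (1/2 : ℝ) • (h * M.lieG M.zeta X Y) + α • M.ric X Y
      + (lam - (β/2 : ℝ) • M.scal) * M.g X Y = 0) :
    ∀ X Y, α • M.ric X Y
      = -(h + algebraMap ℝ F (2 * n * α)) * M.g X Y + h * (M.eta X * M.eta Y) := by
  have gsubL : ∀ X Y Z : V, M.g (X - Y) Z = M.g X Z - M.g Y Z := by
    intro X Y Z
    rw [sub_eq_add_neg, M.g_addL, ← neg_one_smul F Y, M.g_smulL]; ring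
  have gsubR : ∀ X Y Z : V, M.g X (Y - Z) = M.g X Y - M.g X Z := by
    intro X Y Z
    rw [sub_eq_add_neg, M.g_addR, ← neg_one_smul F Z, M.g_smulR]; ring
  have lie : ∀ X Y, M.lieG M.zeta X Y = 2 * (M.g X Y - M.eta X * M.eta Y) := by
    intro X Y
    have hb : ∀ Z, M.bracket M.zeta Z = M.nabla M.zeta Z - M.nabla Z M.zeta :=
      fun Z => (M.torsion_free _ _).symm
    show M.dd M.zeta (M.g X Y) - M.g (M.bracket M.zeta X) Y
        - M.g X (M.bracket M.zeta Y) = _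
    rw [hb X, hb Y, M.compat, gsubL, gsubR, M.nabla_zeta, M.nabla_zeta, gsubL,
      gsubR, M.g_smulL, M.g_smulR, M.eta_eq X, M.eta_eq Y, M.g_symm M.zeta Y]
    ring
  have gzz : M.g M.zeta M.zeta = 1 := by rw [← M.eta_eq, M.eta_zeta]
  simp only [Algebra.smul_def] at hsol ⊢
  have hn : ((n : F)) = algebraMap ℝ F (n : ℝ) := by
    rw [map_natCast]
  have h2 : algebraMap ℝ F (1/2) * 2 = 1 := by
    rw [show (2 : F) = algebraMap ℝ F 2 from (map_ofNat _ 2).symm, ← map_mul]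
    norm_num
  -- determine the constant lam - (β/2) • scal
  have hc : lam - algebraMap ℝ F (β/2) * M.scal = algebraMap ℝ F (2 * n * α) := by
    have e := hsol M.zeta M.zeta
    rw [lie, M.ric_zeta, M.eta_zeta, gzz] at e
    have hA : algebraMap ℝ F (2 * n * α) = 2 * (n : F) * algebraMap ℝ F α := by
      rw [hn, show (2 : F) = algebraMap ℝ F 2 from (map_ofNat _ 2).symm,
        ← map_mul, ← map_mul]
    rw [hA]
    linear_combination e
  intro X Y
  have e := hsol X Y
  rw [lie, hc] at e
  linear_combination e - h * (M.g X Y - M.eta X * M.eta Y) * h2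
end

section
/- Let M be a (2n+1)-dimensional para-Kenmotsu manifold admitting an h-almost Ricci–Yamabe soliton (g, ζ, λ, α, β) whose soliton vector field is the Reeb vector field ζ. Then (β/2) r = λ − 2nα, where r is the scalar curvature of M. -/
/-- If a `(2n+1)`-dimensional para-Kenmotsu manifold admits an
`h`-almost Ricci–Yamabe soliton `(g, ζ, λ, α, β)`, then `(β/2) r = λ − 2nα`. -/
theorem paraKenmotsu_hARYS_scal_eq
    {F V : Type*} [CommRing F] [Algebra ℝ F] [AddCommGroup V] [Module F V]
    (n : ℕ) (M : ParaKenmotsu F V n) (h lam : F) (α β : ℝ)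
    (hsol : ∀ X Y, (1/2 : ℝ) • (h * M.lieG M.zeta X Y) + α • M.ric X Y
      + (lam - (β/2 : ℝ) • M.scal) * M.g X Y = 0) :
    (β/2 : ℝ) • M.scal = lam - algebraMap ℝ F (2 * n * α) := by
  have hb : M.bracket M.zeta M.zeta = 0 := by
    rw [← M.torsion_free]; exact sub_self _
  have hg0 : ∀ X : V, M.g X 0 = 0 := fun X => by
    have := M.g_smulR 0 X 0; simpa using this
  have hgz : M.g M.zeta M.zeta = 1 := by
    rw [← M.eta_eq, M.eta_zeta]
  have hdd1 : M.dd M.zeta (1 : F) = 0 := by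
    have := M.dd_const M.zeta 1; simpa using this
  have hlie : M.lieG M.zeta M.zeta M.zeta = 0 := by
    simp [SemiRiemannian.lieG, hb, hgz, hdd1, hg0, M.g_symm M.zeta 0]
    rw [M.g_symm]; simp [hg0]
  have hric : M.ric M.zeta M.zeta = -(2 * (n : F)) := by
    rw [M.ric_zeta, M.eta_zeta, mul_one]
  have key := hsol M.zeta M.zeta
  rw [hlie, hric, hgz, mul_zero, smul_zero, mul_one, zero_add] at key
  have h2 : α • (-(2 * (n : F))) = -(algebraMap ℝ F (2 * n * α)) := by
    rw [Algebra.smul_def, map_mul, map_mul, map_natCast, map_ofNat]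
    ring
  rw [h2] at key
  linear_combination -key
end

section
/- In a 3-dimensional para-Kenmotsu manifold, the Ricci operator Q (defined by S(X,Y) = g(QX,Y)) satisfies the covariant derivative formula (∇_X Q)Y = (Xr/2)[Y − η(Y)ζ] − (3 + r/2)[g(X,Y)ζ − 2η(X)η(Y)ζ + η(Y)X] for all vector fields X, Y, where r is the scalar curvature. -/
/-! Since `QY = aY − bη(Y)ζ` with `a = r/2 + 1`, `b = r/2 + 3`, the Leibniz rule gives
`(∇_X Q)Y = (Xa)Y − (Xb)η(Y)ζ − b[(∇_X η)(Y)ζ + η(Y)∇_X ζ]`, and `∇_X ζ = X − η(X)ζ`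
(hence `(∇_X η)Y = g(X,Y) − η(X)η(Y)`) turns the bracket into `g(X,Y)ζ − 2η(X)η(Y)ζ + η(Y)X`. -/

namespace SemiRiemannian

variable {F V : Type*} [CommRing F] [Algebra ℝ F] [AddCommGroup V] [Module F V]
  (D : SemiRiemannian F V)

theorem g_sub_right (X Y Z : V) : D.g X (Y - Z) = D.g X Y - D.g X Z :=
  eq_sub_of_add_eq (by rw [← D.g_addR, sub_add_cancel])

theorem nabla_sub_right (X Y Z : V) : D.nabla X (Y - Z) = D.nabla X Y - D.nabla X Z :=
  eq_sub_of_add_eq (by rw [← D.nabla_addR, sub_add_cancel])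

theorem dd_one (X : V) : D.dd X 1 = 0 := by
  simpa using D.dd_const X 1

theorem dd_ofNat (X : V) (n : ℕ) [n.AtLeastTwo] : D.dd X (OfNat.ofNat n) = 0 := by
  rw [← map_ofNat (algebraMap ℝ F) n]
  exact D.dd_const X _

theorem dd_real_smul (X : V) (c : ℝ) (a : F) : D.dd X (c • a) = c • D.dd X a := by
  rw [Algebra.smul_def, D.dd_mul, D.dd_const, zero_mul, zero_add, ← Algebra.smul_def]

end SemiRiemannian

namespace ParaKenmotsu

variable {F V : Type*} [CommRing F] [Algebra ℝ F] [AddCommGroup V] [Module F V] {n : ℕ}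
  (M : ParaKenmotsu F V n)

theorem dd_eta (X Y : V) :
    M.dd X (M.eta Y) = M.eta (M.nabla X Y) + M.g X Y - M.eta X * M.eta Y := by
  rw [M.eta_eq Y, M.compat, M.nabla_zeta, M.g_sub_right, M.g_smulR, ← M.eta_eq, ← M.eta_eq,
    M.g_symm Y X]
  ring

theorem nabla_apply_sub_apply_nabla (Q : V → V) (a b : F)
    (hQ : ∀ Y, Q Y = a • Y - (b * M.eta Y) • M.zeta) (X Y : V) :
    M.nabla X (Q Y) - Q (M.nabla X Y)
      = M.dd X a • Y - (M.dd X b * M.eta Y) • M.zeta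
        - b • (M.g X Y • M.zeta - (2 * (M.eta X * M.eta Y)) • M.zeta + M.eta Y • X) := by
  rw [hQ, hQ, M.nabla_sub_right, M.nabla_leibniz, M.nabla_leibniz, M.nabla_zeta, M.dd_mul,
    M.dd_eta]
  match_scalars <;> ring

end ParaKenmotsu

/-- In a 3-dimensional para-Kenmotsu manifold the Ricci operator
`Q` satisfies
`(∇_X Q)Y = (Xr/2)[Y − η(Y)ζ] − (3 + r/2)[g(X,Y)ζ − 2η(X)η(Y)ζ + η(Y)X]`. -/
theorem paraKenmotsu3_nabla_ricOp
    {F V : Type*} [CommRing F] [Algebra ℝ F] [AddCommGroup V] [Module F V]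
    (M : ParaKenmotsu3 F V) :
    ∀ X Y, M.nabla X (M.ricOp Y) - M.ricOp (M.nabla X Y)
      = ((1/2 : ℝ) • M.dd X M.scal) • (Y - M.eta Y • M.zeta)
        - ((3 : F) + (1/2 : ℝ) • M.scal) •
            (M.g X Y • M.zeta - (2 * (M.eta X * M.eta Y)) • M.zeta + M.eta Y • X) := by
  intro X Y
  have dd_half_scal_add (k : F) (hk : M.dd X k = 0) :
      M.dd X ((1/2 : ℝ) • M.scal + k) = (1/2 : ℝ) • M.dd X M.scal := by
    rw [M.dd_add, M.dd_real_smul, hk, add_zero]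
  rw [M.nabla_apply_sub_apply_nabla M.ricOp _ _ M.ricOp_eq,
    dd_half_scal_add 1 (M.dd_one X), dd_half_scal_add 3 (M.dd_ofNat X 3),
    add_comm _ (3 : F), smul_sub, mul_smul]
end

section
/- Let M be a (2n+1)-dimensional para-Sasakian manifold admitting a proper h-almost Ricci–Yamabe soliton (g, ζ, λ, α, β) whose soliton vector field is the Reeb vector field ζ. Then M is an Einstein manifold; explicitly, S(X,Y) = −2n g(X,Y) for all vector fields X, Y. -/
/-- A `(2n+1)`-dimensional para-Sasakian manifold admitting a proper
`h`-almost Ricci–Yamabe soliton `(g, ζ, λ, α, β)` is an Einstein manifold: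
`S(X,Y) = −2n g(X,Y)`. -/
theorem paraSasakian_proper_hARYS_Einstein
    {F V : Type*} [CommRing F] [Algebra ℝ F] [AddCommGroup V] [Module F V]
    (n : ℕ) (M : ParaSasakian F V n) (h lam : F) (α β : ℝ)
    (hproper : α ≠ 0 ∧ α ≠ 1)
    (hsol : ∀ X Y, (1/2 : ℝ) • (h * M.lieG M.zeta X Y) + α • M.ric X Y
      + (lam - (β/2 : ℝ) • M.scal) * M.g X Y = 0) :
    ∀ X Y, M.ric X Y = -(2 * (n : F)) * M.g X Y := by
  classical
  obtain ⟨hα, -⟩ := hproper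
  -- basic linearity facts
  have g_negL : ∀ X Y : V, M.g (-X) Y = - M.g X Y := by
    intro X Y; rw [← neg_one_smul F X, M.g_smulL, neg_one_mul]
  have g_negR : ∀ X Y : V, M.g X (-Y) = - M.g X Y := by
    intro X Y; rw [← neg_one_smul F Y, M.g_smulR, neg_one_mul]
  have g_subL : ∀ X Y Z : V, M.g (X - Y) Z = M.g X Z - M.g Y Z := by
    intro X Y Z
    rw [sub_eq_add_neg, M.g_addL, g_negL, sub_eq_add_neg]
  -- halving trick in F
  have half : ∀ c : F, c + c = 0 → c = 0 := by
    intro c hc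
    have h2 : (2 : ℝ) • c = 0 := by rw [two_smul]; exact hc
    have : ((1/2 : ℝ) * 2) • c = 0 := by rw [mul_smul, h2, smul_zero]
    simpa using this
  -- dd of the constant 1
  have hdd1 : ∀ X : V, M.dd X (1 : F) = 0 := by
    intro X
    have := M.dd_const X 1
    rwa [map_one] at this
  have hgζζ : M.g M.zeta M.zeta = 1 := by rw [← M.eta_eq, M.eta_zeta]
  -- g(φX, ζ) = 0
  have hphiζ : ∀ X : V, M.g (M.phi X) M.zeta = 0 := by
    intro X
    have h1 := M.compat X M.zeta M.zeta
    rw [hgζζ, hdd1, M.nabla_zeta, g_negL, g_negR,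
      M.g_symm M.zeta (M.phi X)] at h1
    exact half _ (by linear_combination h1)
  -- η ∘ φ = 0
  have hηφ : ∀ X : V, M.eta (M.phi X) = 0 := by
    intro X; rw [M.eta_eq]; exact hphiζ X
  -- skew-symmetry : g(φX, Y) = - g(X, φY)
  have hskew : ∀ X Y : V, M.g (M.phi X) Y = - M.g X (M.phi Y) := by
    intro X Y
    have h1 := M.g_phi (M.phi X) Y
    rw [M.phi_sq, hηφ, zero_mul, add_zero, g_subL, M.g_smulL,
      M.g_symm M.zeta (M.phi Y), hphiζ, mul_zero, sub_zero] at h1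
    linear_combination h1
  -- £_ζ g = 0
  have hlie : ∀ X Y : V, M.lieG M.zeta X Y = 0 := by
    intro X Y
    unfold SemiRiemannian.lieG
    rw [← M.torsion_free M.zeta X, ← M.torsion_free M.zeta Y,
      M.compat M.zeta X Y, g_subL]
    have h2 : M.g X (M.nabla M.zeta Y - M.nabla Y M.zeta)
        = M.g X (M.nabla M.zeta Y) - M.g X (M.nabla Y M.zeta) := by
      rw [sub_eq_add_neg, M.g_addR, g_negR, sub_eq_add_neg]
    rw [h2, M.nabla_zeta, M.nabla_zeta, g_negL, g_negR, hskew]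
    ring
  -- the soliton equation simplifies
  have key : ∀ X Y : V,
      α • M.ric X Y + (lam - (β/2 : ℝ) • M.scal) * M.g X Y = 0 := by
    intro X Y
    have := hsol X Y
    rwa [hlie, mul_zero, smul_zero, zero_add] at this
  -- evaluate at (ζ, ζ)
  have hc : (lam - (β/2 : ℝ) • M.scal) = α • (2 * (n : F)) := by
    have h1 := key M.zeta M.zeta
    rw [M.ric_zeta, M.eta_zeta, hgζζ, mul_one, mul_one] at h1
    have : α • (-(2 * (n : F))) = - (α • (2 * (n : F))) := by
      rw [smul_neg]
    rw [this] at h1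
    linear_combination h1
  intro X Y
  have h1 := key X Y
  rw [hc, smul_mul_assoc, ← smul_add] at h1
  have h2 : M.ric X Y + 2 * (n : F) * M.g X Y = 0 := by
    have := congrArg (fun x => α⁻¹ • x) h1
    simpa [smul_smul, inv_mul_cancel₀ hα] using this
  linear_combination h2
end

section
/- Let M be a (2n+1)-dimensional para-Sasakian manifold admitting an h-almost Ricci–Yamabe soliton (g, ζ, λ, α, β) whose soliton vector field is the Reeb vector field ζ. Then β r = 2λ − 4nα, where r is the scalar curvature of M. -/
/-- If a `(2n+1)`-dimensional para-Sasakian manifold admits an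
`h`-almost Ricci–Yamabe soliton `(g, ζ, λ, α, β)`, then `β r = 2λ − 4nα`. -/
theorem paraSasakian_hARYS_scal_eq
    {F V : Type*} [CommRing F] [Algebra ℝ F] [AddCommGroup V] [Module F V]
    (n : ℕ) (M : ParaSasakian F V n) (h lam : F) (α β : ℝ)
    (hsol : ∀ X Y, (1/2 : ℝ) • (h * M.lieG M.zeta X Y) + α • M.ric X Y
      + (lam - (β/2 : ℝ) • M.scal) * M.g X Y = 0) :
    β • M.scal = 2 * lam - algebraMap ℝ F (4 * n * α) := by
  have hb : M.bracket M.zeta M.zeta = 0 := by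
    have := M.torsion_free M.zeta M.zeta; simpa using this.symm
  have hg : M.g M.zeta M.zeta = 1 := by rw [← M.eta_eq, M.eta_zeta]
  have hlie : M.lieG M.zeta M.zeta M.zeta = 0 := by
    unfold SemiRiemannian.lieG
    rw [hb, hg]
    have : (1 : F) = algebraMap ℝ F 1 := by simp
    rw [this, M.dd_const]
    have gz : ∀ X : V, M.g 0 X = 0 := fun X => by
      have := M.g_smulL 0 0 X; simpa using this
    rw [M.g_symm M.zeta 0, gz]
    simp
  have hric : M.ric M.zeta M.zeta = -(2 * (n : F)) := by
    have := M.ric_zeta M.zeta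
    rw [M.eta_zeta] at this
    simpa using this
  have key := hsol M.zeta M.zeta
  rw [hlie, hric, hg] at key
  simp only [mul_zero, smul_zero, mul_one] at key
  rw [Algebra.smul_def, Algebra.smul_def] at key
  rw [Algebra.smul_def]
  have h2 : algebraMap ℝ F β = 2 * algebraMap ℝ F (β/2) := by
    rw [← map_ofNat (algebraMap ℝ F) 2, ← map_mul]
    congr 1
    ring
  have h4 : algebraMap ℝ F (4 * n * α) = 2 * ((n:F) * (2 * algebraMap ℝ F α)) := by
    rw [map_mul, map_mul, map_natCast, map_ofNat]
    ring
  rw [h2, h4]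
  linear_combination (-2 : F) * key
end

section
/- Let M be a (2n+1)-dimensional para-Sasakian manifold admitting an h-almost Ricci soliton (g, ζ, λ) (i.e. an h-almost Ricci–Yamabe soliton with α = 1 and β = 0) whose soliton vector field is the Reeb vector field ζ. Then λ = 2n, so the soliton is expanding. -/
/-- If a `(2n+1)`-dimensional para-Sasakian manifold admits an
`h`-almost Ricci soliton `(g, ζ, λ)` (the case `α = 1`, `β = 0`), then `λ = 2n`,
so the soliton is expanding. -/
theorem paraSasakian_hAlmostRicciSoliton_expanding
    {F V : Type*} [CommRing F] [Algebra ℝ F] [AddCommGroup V] [Module F V]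
    (n : ℕ) (M : ParaSasakian F V n) (h lam : F)
    (hsol : ∀ X Y, (1/2 : ℝ) • (h * M.lieG M.zeta X Y) + M.ric X Y
      + lam * M.g X Y = 0) :
    lam = algebraMap ℝ F (2 * n) := by
  have hgz : M.g M.zeta M.zeta = 1 := by rw [← M.eta_eq, M.eta_zeta]
  have hb : M.bracket M.zeta M.zeta = 0 := by
    rw [← M.torsion_free, sub_self]
  have hg0 : M.g (0 : V) M.zeta = 0 := by
    have := M.g_smulL 0 0 M.zeta; simpa using this
  have hdd1 : M.dd M.zeta (1 : F) = 0 := by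
    have := M.dd_const M.zeta 1; simpa using this
  have hlie : M.lieG M.zeta M.zeta M.zeta = 0 := by
    unfold SemiRiemannian.lieG
    rw [hgz, hb, hdd1, hg0, M.g_symm, hg0]
    ring
  have hric : M.ric M.zeta M.zeta = -(2 * (n : F)) := by
    rw [M.ric_zeta, M.eta_zeta, mul_one]
  have := hsol M.zeta M.zeta
  rw [hlie, hgz, hric, mul_zero, smul_zero, mul_one] at this
  have hlam : lam = 2 * (n : F) := by linear_combination this
  rw [hlam]
  simp [map_ofNat]
end

section
/- Let M be a 3-dimensional para-Sasakian manifold admitting a proper h-almost gradient Ricci–Yamabe soliton (g, f, λ, α, β) with h nowhere zero. Then S(X,Y) = −2 g(X,Y), the curvature tensor satisfies R(X,Y)Z = −[g(Y,Z)X − g(X,Z)Y], and hence M is a space of constant sectional curvature −1, locally isometric to the hyperbolic space H³(1). -/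
section AuxHAGRYS

variable {F V : Type*} [CommRing F] [Algebra ℝ F] [AddCommGroup V] [Module F V]

theorem gr_zeroL (D : SemiRiemannian F V) (Y : V) : D.g 0 Y = 0 := by
  have h := D.g_addL 0 0 Y
  rw [add_zero] at h
  linear_combination -h

theorem gr_negL (D : SemiRiemannian F V) (X Y : V) : D.g (-X) Y = -D.g X Y := by
  have h := D.g_addL X (-X) Y
  rw [add_neg_cancel] at h
  linear_combination gr_zeroL D Y - h

theorem gr_subL (D : SemiRiemannian F V) (X Y Z : V) :
    D.g (X - Y) Z = D.g X Z - D.g Y Z := by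
  rw [sub_eq_add_neg, D.g_addL, gr_negL, ← sub_eq_add_neg]

theorem gr_negR (D : SemiRiemannian F V) (X Y : V) : D.g X (-Y) = -D.g X Y := by
  rw [D.g_symm, gr_negL, D.g_symm]

theorem gr_subR (D : SemiRiemannian F V) (X Y Z : V) :
    D.g X (Y - Z) = D.g X Y - D.g X Z := by
  rw [D.g_symm, gr_subL, D.g_symm Y X, D.g_symm Z X]

theorem nabla_zeroR (D : SemiRiemannian F V) (X : V) : D.nabla X 0 = 0 := by
  have h := D.nabla_addR X 0 0
  rw [add_zero] at h
  have h2 := h.symm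
  exact add_eq_left.mp h2

theorem nabla_negR (D : SemiRiemannian F V) (X Y : V) :
    D.nabla X (-Y) = -D.nabla X Y := by
  have h := D.nabla_addR X Y (-Y)
  rw [add_neg_cancel, nabla_zeroR] at h
  exact eq_neg_of_add_eq_zero_right h.symm

theorem nabla_subR (D : SemiRiemannian F V) (X Y Z : V) :
    D.nabla X (Y - Z) = D.nabla X Y - D.nabla X Z := by
  rw [sub_eq_add_neg, D.nabla_addR, nabla_negR, ← sub_eq_add_neg]

theorem ps_gzetaR (M : ParaSasakian3 F V) (W : V) : M.g W M.zeta = M.eta W :=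
  (M.eta_eq W).symm

theorem ps_gzetaL (M : ParaSasakian3 F V) (W : V) : M.g M.zeta W = M.eta W := by
  rw [M.g_symm M.zeta W, ps_gzetaR]

theorem ps_gzz (M : ParaSasakian3 F V) : M.g M.zeta M.zeta = 1 := by
  rw [ps_gzetaR, M.eta_zeta]

theorem ps_eta_smul (M : ParaSasakian3 F V) (c : F) (X : V) :
    M.eta (c • X) = c * M.eta X := by
  rw [M.eta_eq, M.g_smulL, ← M.eta_eq]

theorem ps_eta_sub (M : ParaSasakian3 F V) (X Y : V) :
    M.eta (X - Y) = M.eta X - M.eta Y := by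
  rw [M.eta_eq, gr_subL, ← M.eta_eq, ← M.eta_eq]

theorem ps_dd_eta (M : ParaSasakian3 F V) (X Y : V) :
    M.dd X (M.eta Y) = M.eta (M.nabla X Y) - M.g Y (M.phi X) := by
  rw [M.eta_eq Y, M.compat X Y M.zeta, M.nabla_zeta X, ps_gzetaR, gr_negR,
    ← sub_eq_add_neg]

theorem ps_R1 (M : ParaSasakian3 F V) (X Y : V) :
    M.g (M.phi X) Y + M.g X (M.phi Y)
      = M.eta Y * M.eta (M.phi X) + M.eta X * M.eta (M.phi Y) := by
  have h := M.g_phi X (M.phi Y)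
  rw [M.phi_sq Y, gr_subR, M.g_smulR, ps_gzetaR] at h
  linear_combination h

theorem ps_eta_phi_phi (M : ParaSasakian3 F V) (Z : V) :
    M.eta (M.phi (M.phi Z)) = 0 := by
  rw [M.phi_sq Z, ps_eta_sub, ps_eta_smul, M.eta_zeta]
  ring

theorem ps_g_phi_zeta (M : ParaSasakian3 F V) (Y : V) :
    M.g Y (M.phi M.zeta) = M.eta (M.phi M.zeta) * M.eta Y := by
  have h := ps_R1 M Y M.zeta
  rw [M.eta_zeta, ps_gzetaR] at h
  linear_combination h

theorem ps_aux1 (M : ParaSasakian3 F V) (Df : V) (A B : F)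
    (hN : ∀ W, M.nabla W Df = (B * M.eta W) • M.zeta - A • W) (X Y : V) :
    M.g (M.curv X Y Df) M.zeta =
      (M.dd X B - M.dd X A) * M.eta Y - (M.dd Y B - M.dd Y A) * M.eta X
      + B * (M.g X (M.phi Y) - M.g Y (M.phi X))
      + B * M.eta X * M.eta (M.phi Y) - B * M.eta Y * M.eta (M.phi X) := by
  show M.g (M.nabla X (M.nabla Y Df) - M.nabla Y (M.nabla X Df)
      - M.nabla (M.bracket X Y) Df) M.zeta = _
  rw [hN Y, hN X, hN (M.bracket X Y), ← M.torsion_free X Y]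
  rw [nabla_subR, nabla_subR]
  simp only [M.nabla_leibniz, M.nabla_zeta]
  simp only [gr_subL, M.g_addL, M.g_smulL, gr_negL]
  simp only [ps_gzetaR]
  simp only [M.dd_mul, ps_dd_eta, ps_eta_sub, M.eta_zeta]
  ring

theorem ps_aux2 (M : ParaSasakian3 F V) (f : F) (Df : V)
    (hDf : M.IsGradient f Df) (X Y : V) :
    M.g (M.curv X Y Df) M.zeta = M.dd X f * M.eta Y - M.dd Y f * M.eta X := by
  have hg : ∀ W, M.g W Df = M.dd W f := fun W => (M.g_symm W Df).trans (hDf W)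
  show M.g (M.nabla X (M.nabla Y Df) - M.nabla Y (M.nabla X Df)
      - M.nabla (M.bracket X Y) Df) M.zeta = _
  rw [M.curv_eq X Y Df, ← M.ricOp_spec Y Df, ← M.ricOp_spec X Df]
  simp only [M.ricOp_eq]
  simp only [gr_subL, M.g_addL, M.g_smulL, gr_negL]
  simp only [hg, ps_gzetaR, M.eta_zeta]
  simp only [Algebra.smul_def]
  ring

theorem ps_aux3 (M : ParaSasakian3 F V) (f : F) (Df : V) (A B : F)
    (hN : ∀ W, M.nabla W Df = (B * M.eta W) • M.zeta - A • W)
    (hDf : M.IsGradient f Df) :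
    ∀ X Y, B * (M.g X (M.phi Y) - M.eta X * M.eta (M.phi Y)) = 0 := by
  have hE3 : ∀ X Y,
      (M.dd X B - M.dd X A - M.dd X f) * M.eta Y
      - (M.dd Y B - M.dd Y A - M.dd Y f) * M.eta X
      + B * (M.g X (M.phi Y) - M.g Y (M.phi X))
      + B * M.eta X * M.eta (M.phi Y) - B * M.eta Y * M.eta (M.phi X) = 0 := by
    intro X Y
    linear_combination ps_aux2 M f Df hDf X Y - ps_aux1 M Df A B hN X Y
  have hE4 : ∀ Y, M.dd Y B - M.dd Y A - M.dd Y f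
      = M.eta Y * (M.dd M.zeta B - M.dd M.zeta A - M.dd M.zeta f)
        + 2 * B * M.eta (M.phi Y) - 2 * B * M.eta (M.phi M.zeta) * M.eta Y := by
    intro Y
    have h := hE3 M.zeta Y
    rw [M.eta_zeta, ps_gzetaL, ps_g_phi_zeta] at h
    linear_combination -h
  have hE5 : ∀ X Y,
      2 * (B * (M.g X (M.phi Y) - M.eta X * M.eta (M.phi Y))) = 0 := by
    intro X Y
    have h := hE3 X Y
    rw [M.g_symm Y (M.phi X)] at h
    linear_combination h - M.eta Y * hE4 X + M.eta X * hE4 Y + B * ps_R1 M X Y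
  intro X Y
  have h2 := hE5 X Y
  have h12 : (algebraMap ℝ F) (1/2) * 2 = 1 := by
    rw [show ((2:F)) = (algebraMap ℝ F) 2 from (map_ofNat _ 2).symm, ← map_mul]
    norm_num
  linear_combination (algebraMap ℝ F) (1/2) * h2
    - (B * (M.g X (M.phi Y) - M.eta X * M.eta (M.phi Y))) * h12

theorem ps_aux4 (M : ParaSasakian3 F V) (f : F) (Df : V) (A B : F)
    (hN : ∀ W, M.nabla W Df = (B * M.eta W) • M.zeta - A • W)
    (hDf : M.IsGradient f Df) :
    ∀ X Z, B * (M.g X Z - M.eta X * M.eta Z) = 0 := by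
  intro X Z
  have h := ps_aux3 M f Df A B hN hDf X (M.phi Z)
  rw [ps_eta_phi_phi, M.phi_sq Z, gr_subR, M.g_smulR, ← M.eta_eq] at h
  linear_combination h

end AuxHAGRYS

/-- If a 3-dimensional para-Sasakian manifold admits a proper
`h`-almost gradient Ricci–Yamabe soliton `(g, f, λ, α, β)` with `h` nowhere zero,
then `S(X,Y) = −2 g(X,Y)` and `R(X,Y)Z = −[g(Y,Z)X − g(X,Z)Y]`, i.e. the manifold
is a space of constant sectional curvature `−1`, locally isometric to `H³(1)`. -/
theorem paraSasakian3_proper_hAGRYS_hyperbolic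
    {F V : Type*} [CommRing F] [Algebra ℝ F] [AddCommGroup V] [Module F V]
    (M : ParaSasakian3 F V) (h f lam : F) (Df : V) (α β : ℝ)
    (hh : IsUnit h) (hproper : α ≠ 0 ∧ α ≠ 1)
    (hDf : M.IsGradient f Df)
    (hsol : ∀ X Y, h * M.hess Df X Y
      + (lam - (β/2 : ℝ) • M.scal) * M.g X Y + α • M.ric X Y = 0) :
    (∀ X Y, M.ric X Y = -2 * M.g X Y) ∧
      ∀ X Y Z, M.curv X Y Z = -(M.g Y Z • X - M.g X Z • Y) := by
  obtain ⟨u, hu⟩ := hh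
  set aF : F := lam - (β/2 : ℝ) • M.scal
      + (algebraMap ℝ F) α * ((1/2 : ℝ) • M.scal + 1) with haF
  set bF : F := (algebraMap ℝ F) α * ((1/2 : ℝ) • M.scal + 3) with hbF
  have hN : ∀ W, M.nabla W Df =
      (((↑u⁻¹ : F) * bF) * M.eta W) • M.zeta - ((↑u⁻¹ : F) * aF) • W := by
    intro W
    have hvec : (↑u : F) • M.nabla W Df
        - ((bF * M.eta W) • M.zeta - aF • W) = 0 := by
      refine M.g_nondeg _ (fun Y => ?_)
      have h1 := hsol W Y
      rw [show M.hess Df W Y = M.g (M.nabla W Df) Y from rfl,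
        ← M.ricOp_spec W Y, M.ricOp_eq W] at h1
      rw [hu]
      simp only [haF, hbF, gr_subL, gr_subR, M.g_addL, M.g_smulL, gr_negL] at h1 ⊢
      simp only [ps_gzetaL, ps_gzetaR] at h1 ⊢
      simp only [Algebra.smul_def] at h1 ⊢
      linear_combination h1
    have h2 := sub_eq_zero.mp hvec
    calc M.nabla W Df = (1 : F) • M.nabla W Df := (one_smul F _).symm
      _ = (((↑u⁻¹ : F)) * (↑u : F)) • M.nabla W Df := by rw [Units.inv_mul]
      _ = (↑u⁻¹ : F) • ((↑u : F) • M.nabla W Df) := by rw [mul_smul]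
      _ = (↑u⁻¹ : F) • ((bF * M.eta W) • M.zeta - aF • W) := by rw [h2]
      _ = _ := by rw [smul_sub, smul_smul, smul_smul, ← mul_assoc]
  have hB0 := ps_aux4 M f Df ((↑u⁻¹ : F) * aF) ((↑u⁻¹ : F) * bF) hN hDf
  have hE7 : ∀ X Z,
      ((1/2 : ℝ) • M.scal + 3) * (M.g X Z - M.eta X * M.eta Z) = 0 := by
    intro X Z
    have h := hB0 X Z
    have huu : (↑u : F) * ↑u⁻¹ = 1 := Units.mul_inv u
    have hα : (algebraMap ℝ F) α⁻¹ * (algebraMap ℝ F) α = 1 := by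
      rw [← map_mul, inv_mul_cancel₀ hproper.1, map_one]
    rw [hbF] at h
    simp only [Algebra.smul_def] at h ⊢
    linear_combination ((algebraMap ℝ F) α⁻¹ * (↑u : F)) * h
      - ((algebraMap ℝ F) α⁻¹ * (algebraMap ℝ F) α
          * ((algebraMap ℝ F) (1/2) * M.scal + 3)
          * (M.g X Z - M.eta X * M.eta Z)) * huu
      - (((algebraMap ℝ F) (1/2) * M.scal + 3)
          * (M.g X Z - M.eta X * M.eta Z)) * hα
  have hric : ∀ X Y, M.ric X Y = -2 * M.g X Y := by
    intro X Y
    have h := hE7 X Y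
    rw [← M.ricOp_spec X Y, M.ricOp_eq X]
    simp only [gr_subL, M.g_smulL]
    simp only [ps_gzetaL]
    simp only [Algebra.smul_def] at h ⊢
    linear_combination h
  refine ⟨hric, fun X Y Z => ?_⟩
  rw [← sub_eq_zero]
  refine M.g_nondeg _ (fun W => ?_)
  rw [show M.curv X Y Z = M.nabla X (M.nabla Y Z) - M.nabla Y (M.nabla X Z)
      - M.nabla (M.bracket X Y) Z from rfl,
    M.curv_eq X Y Z, M.ricOp_eq X, M.ricOp_eq Y, hric Y Z, hric X Z]
  have h1 := hE7 X Z
  have h2 := hE7 Y Z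
  simp only [gr_subL, M.g_addL, M.g_smulL, gr_negL]
  simp only [ps_gzetaL]
  simp only [Algebra.smul_def] at h1 h2 ⊢
  linear_combination (M.eta W * M.eta Y) * h1 - (M.eta W * M.eta X) * h2
end

section
/- Let M be a para-cosymplectic manifold admitting a proper h-almost Ricci–Yamabe soliton (g, ζ, λ, α, β) whose soliton vector field is the Reeb vector field ζ. Then M is an Einstein manifold; explicitly, α S(X,Y) = −(λ − (β/2) r) g(X,Y) for all vector fields X, Y. -/
/-- A para-cosymplectic manifold admitting a proper `h`-almost
Ricci–Yamabe soliton `(g, ζ, λ, α, β)` is an Einstein manifold: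
`α S(X,Y) = −(λ − (β/2) r) g(X,Y)`. -/
theorem paraCosymplectic_proper_hARYS_Einstein
    {F V : Type*} [CommRing F] [Algebra ℝ F] [AddCommGroup V] [Module F V]
    (M : ParaCosymplectic F V) (h lam : F) (α β : ℝ)
    (hproper : α ≠ 0 ∧ α ≠ 1)
    (hsol : ∀ X Y, (1/2 : ℝ) • (h * M.lieG M.zeta X Y) + α • M.ric X Y
      + (lam - (β/2 : ℝ) • M.scal) * M.g X Y = 0) :
    ∀ X Y, α • M.ric X Y = -(lam - (β/2 : ℝ) • M.scal) * M.g X Y := by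
  have hlie : ∀ X Y, M.lieG M.zeta X Y = 0 := by
    intro X Y
    have hbX : M.bracket M.zeta X = M.nabla M.zeta X := by
      have := M.torsion_free M.zeta X
      rw [M.nabla_zeta X] at this
      simpa using this.symm
    have hbY : M.bracket M.zeta Y = M.nabla M.zeta Y := by
      have := M.torsion_free M.zeta Y
      rw [M.nabla_zeta Y] at this
      simpa using this.symm
    unfold SemiRiemannian.lieG
    rw [M.compat M.zeta X Y, hbX, hbY]
    ring
  intro X Y
  have h1 := hsol X Y
  rw [hlie X Y, mul_zero, smul_zero, zero_add] at h1
  have : α • M.ric X Y = -((lam - (β/2 : ℝ) • M.scal) * M.g X Y) := by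
    linear_combination h1
  rw [this]; ring
end
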